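/- Let K be an algebraically closed field of characteristic 2, let b, c ∈ K with b ≠ c, b ≠ 1, c ≠ 1 and w := b + c ≠ 0, and let a = (a₁,a₂,a₃,a₄) ∈ K⁴, a ≠ 0. Then Sing(X_a) contains both the S₄-orbit of [1:1:0:0] and the S₄-orbit of [b:c:1:1] if and only if (a₁,a₂,a₃,a₄) is proportional to ((1+w)/w³, 1/w, 1, w). Moreover, if these conditions are satisfied, then Sing(X_a) is infinite (every point [b':c':1:1] with b' + c' = w is singular). -/
import Mathlib


open MvPolynomial

noncomputable section

/-- The singular locus of the surface `{F = 0} ⊆ ℙ³_K`: the set of points of `ℙ³_K` at which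
`F` and all four partial derivatives of `F` vanish (tested on every representative vector). -/
def singLocus {K : Type*} [Field K] (F : MvPolynomial (Fin 4) K) :
    Set (Projectivization K (Fin 4 → K)) :=
  {p | ∀ (v : Fin 4 → K) (hv : v ≠ 0), Projectivization.mk K v hv = p →
      (eval v F = 0 ∧ ∀ i, eval v (pderiv i F) = 0)}

/-- The `S₄`-orbit of the point of `ℙ³_K` represented by `v`, for the action of `S₄` permuting
the four coordinates. -/
def s4Orbit {K : Type*} [Field K] (v : Fin 4 → K) : Set (Projectivization K (Fin 4 → K)) :=
  {q | ∃ (g : Equiv.Perm (Fin 4)) (h : v ∘ g ≠ 0), q = Projectivization.mk K (v ∘ g) h}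

/-- The symmetric quartic `F_a = a₁σ₁⁴ + a₂σ₁²σ₂ + a₃σ₁σ₃ + a₄σ₄`, where `σᵢ` is the `i`-th
elementary symmetric polynomial in `x₁, x₂, x₃, x₄`. -/
def symQuartic {K : Type*} [Field K] (a : Fin 4 → K) : MvPolynomial (Fin 4) K :=
  C (a 0) * esymm (Fin 4) K 1 ^ 4 + C (a 1) * esymm (Fin 4) K 1 ^ 2 * esymm (Fin 4) K 2
    + C (a 2) * esymm (Fin 4) K 1 * esymm (Fin 4) K 3 + C (a 3) * esymm (Fin 4) K 4

namespace SQAux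

variable {K : Type*} [Field K]

lemma hE1 : esymm (Fin 4) K 1 = X 0 + X 1 + X 2 + X 3 := by
  rw [esymm]
  have h : (Finset.univ : Finset (Fin 4)).powersetCard 1 = {{0},{1},{2},{3}} := by decide
  rw [h]; simp +decide [Finset.sum_insert, Finset.prod_insert]; ring

lemma hE2 : esymm (Fin 4) K 2 = X 0*X 1 + X 0*X 2 + X 0*X 3 + X 1*X 2 + X 1*X 3 + X 2*X 3 := by
  rw [esymm]
  have h : (Finset.univ : Finset (Fin 4)).powersetCard 2
      = {{0,1},{0,2},{0,3},{1,2},{1,3},{2,3}} := by decide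
  rw [h]; simp +decide [Finset.sum_insert, Finset.prod_insert]; ring

lemma hE3 : esymm (Fin 4) K 3 = X 0*X 1*X 2 + X 0*X 1*X 3 + X 0*X 2*X 3 + X 1*X 2*X 3 := by
  rw [esymm]
  have h : (Finset.univ : Finset (Fin 4)).powersetCard 3
      = {{0,1,2},{0,1,3},{0,2,3},{1,2,3}} := by decide
  rw [h]; simp +decide [Finset.sum_insert, Finset.prod_insert]; ring

lemma hE4 : esymm (Fin 4) K 4 = X 0*X 1*X 2*X 3 := by
  rw [esymm]
  have h : (Finset.univ : Finset (Fin 4)).powersetCard 4 = {{0,1,2,3}} := by decide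
  rw [h]; simp +decide [Finset.sum_insert, Finset.prod_insert]; ring

lemma pdE1 (i : Fin 4) : pderiv i (X 0 + X 1 + X 2 + X 3 : MvPolynomial (Fin 4) K) = 1 := by
  fin_cases i <;> simp

lemma pdE2 (i : Fin 4) : pderiv i
    (X 0*X 1 + X 0*X 2 + X 0*X 3 + X 1*X 2 + X 1*X 3 + X 2*X 3 : MvPolynomial (Fin 4) K)
    = (X 0 + X 1 + X 2 + X 3) - X i := by
  fin_cases i <;> (simp [pderiv_mul]; try ring)

lemma pdE3 (i : Fin 4) : pderiv i
    (X 0*X 1*X 2 + X 0*X 1*X 3 + X 0*X 2*X 3 + X 1*X 2*X 3 : MvPolynomial (Fin 4) K)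
    = (X 0*X 1 + X 0*X 2 + X 0*X 3 + X 1*X 2 + X 1*X 3 + X 2*X 3)
      - X i * (X 0 + X 1 + X 2 + X 3) + X i ^ 2 := by
  fin_cases i <;> (simp [pderiv_mul]; try ring)

lemma pdE4 (i : Fin 4) : pderiv i (X 0*X 1*X 2*X 3 : MvPolynomial (Fin 4) K)
    = (X 0*X 1*X 2 + X 0*X 1*X 3 + X 0*X 2*X 3 + X 1*X 2*X 3)
      - X i * ((X 0*X 1 + X 0*X 2 + X 0*X 3 + X 1*X 2 + X 1*X 3 + X 2*X 3)
      - X i * (X 0 + X 1 + X 2 + X 3) + X i ^ 2) := by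
  fin_cases i <;> (simp [pderiv_mul]; try ring)

lemma pdT1 (a0 : K) (i : Fin 4) :
    pderiv i (C a0 * (X 0 + X 1 + X 2 + X 3 : MvPolynomial (Fin 4) K) ^ 4)
    = C a0 * (4 * (X 0 + X 1 + X 2 + X 3) ^ 3) := by
  rw [pderiv_C_mul, pderiv_pow, pdE1]; push_cast; ring

lemma pdT2 (a1 : K) (i : Fin 4) :
    pderiv i (C a1 * (X 0 + X 1 + X 2 + X 3 : MvPolynomial (Fin 4) K) ^ 2
      * (X 0*X 1 + X 0*X 2 + X 0*X 3 + X 1*X 2 + X 1*X 3 + X 2*X 3))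
    = C a1 * (2 * (X 0 + X 1 + X 2 + X 3)
        * (X 0*X 1 + X 0*X 2 + X 0*X 3 + X 1*X 2 + X 1*X 3 + X 2*X 3)
        + (X 0 + X 1 + X 2 + X 3) ^ 2 * ((X 0 + X 1 + X 2 + X 3) - X i)) := by
  rw [pderiv_mul, pderiv_C_mul, pderiv_pow, pdE1, pdE2]; push_cast; ring

lemma pdT3 (a2 : K) (i : Fin 4) :
    pderiv i (C a2 * (X 0 + X 1 + X 2 + X 3 : MvPolynomial (Fin 4) K)
      * (X 0*X 1*X 2 + X 0*X 1*X 3 + X 0*X 2*X 3 + X 1*X 2*X 3))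
    = C a2 * ((X 0*X 1*X 2 + X 0*X 1*X 3 + X 0*X 2*X 3 + X 1*X 2*X 3)
        + (X 0 + X 1 + X 2 + X 3) * ((X 0*X 1 + X 0*X 2 + X 0*X 3 + X 1*X 2 + X 1*X 3 + X 2*X 3)
            - X i * (X 0 + X 1 + X 2 + X 3) + X i ^ 2)) := by
  rw [pderiv_mul, pderiv_C_mul, pdE1, pdE3]; ring

lemma pdT4 (a3 : K) (i : Fin 4) : pderiv i (C a3 * (X 0*X 1*X 2*X 3 : MvPolynomial (Fin 4) K))
    = C a3 * ((X 0*X 1*X 2 + X 0*X 1*X 3 + X 0*X 2*X 3 + X 1*X 2*X 3)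
        - X i * ((X 0*X 1 + X 0*X 2 + X 0*X 3 + X 1*X 2 + X 1*X 3 + X 2*X 3)
            - X i * (X 0 + X 1 + X 2 + X 3) + X i ^ 2)) := by
  rw [pderiv_C_mul, pdE4]

lemma evalF (a : Fin 4 → K) (u : Fin 4 → K) :
    eval u (symQuartic a) =
      a 0 * (u 0 + u 1 + u 2 + u 3)^4
      + a 1 * (u 0 + u 1 + u 2 + u 3)^2
          * (u 0*u 1 + u 0*u 2 + u 0*u 3 + u 1*u 2 + u 1*u 3 + u 2*u 3)
      + a 2 * (u 0 + u 1 + u 2 + u 3) * (u 0*u 1*u 2 + u 0*u 1*u 3 + u 0*u 2*u 3 + u 1*u 2*u 3)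
      + a 3 * (u 0*u 1*u 2*u 3) := by
  rw [symQuartic, hE1, hE2, hE3, hE4]
  simp only [map_add, map_mul, map_pow, eval_C, eval_X]

set_option maxHeartbeats 1000000 in
lemma evalPD (a : Fin 4 → K) (u : Fin 4 → K) (i : Fin 4) :
    eval u (pderiv i (symQuartic a)) =
      4 * a 0 * (u 0 + u 1 + u 2 + u 3)^3
      + a 1 * (2 * (u 0 + u 1 + u 2 + u 3)
            * (u 0*u 1 + u 0*u 2 + u 0*u 3 + u 1*u 2 + u 1*u 3 + u 2*u 3)
          + (u 0 + u 1 + u 2 + u 3)^2 * ((u 0 + u 1 + u 2 + u 3) - u i))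
      + a 2 * ((u 0*u 1*u 2 + u 0*u 1*u 3 + u 0*u 2*u 3 + u 1*u 2*u 3)
          + (u 0 + u 1 + u 2 + u 3)
            * ((u 0*u 1 + u 0*u 2 + u 0*u 3 + u 1*u 2 + u 1*u 3 + u 2*u 3)
               - u i * (u 0 + u 1 + u 2 + u 3) + u i ^ 2))
      + a 3 * ((u 0*u 1*u 2 + u 0*u 1*u 3 + u 0*u 2*u 3 + u 1*u 2*u 3)
          - u i * ((u 0*u 1 + u 0*u 2 + u 0*u 3 + u 1*u 2 + u 1*u 3 + u 2*u 3)
               - u i * (u 0 + u 1 + u 2 + u 3) + u i ^ 2)) := by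
  rw [symQuartic, hE1, hE2, hE3, hE4]
  simp only [map_add]
  rw [pdT1, pdT2, pdT3, pdT4]
  simp only [map_add, map_mul, map_pow, map_sub, eval_C, eval_X, map_natCast, map_one,
    map_ofNat]
  ring

lemma symm_symQuartic (a : Fin 4 → K) (g : Equiv.Perm (Fin 4)) :
    rename ⇑g (symQuartic a) = symQuartic a := by
  simp only [symQuartic, map_add, map_mul, map_pow, rename_C, rename_esymm]

lemma eval_comp_perm (a : Fin 4 → K) (v : Fin 4 → K) (g : Equiv.Perm (Fin 4)) :
    eval (v ∘ ⇑g) (symQuartic a) = eval v (symQuartic a) := by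
  conv_lhs => rw [← symm_symQuartic a g⁻¹]
  rw [eval_rename, show (v ∘ ⇑g) ∘ ⇑g⁻¹ = v from funext fun x => by simp]

lemma evalPD_comp_perm (a : Fin 4 → K) (v : Fin 4 → K) (g : Equiv.Perm (Fin 4)) (i : Fin 4) :
    eval (v ∘ ⇑g) (pderiv i (symQuartic a)) = eval v (pderiv (g i) (symQuartic a)) := by
  conv_lhs =>
    rw [← symm_symQuartic a g⁻¹, show (i : Fin 4) = g⁻¹ (g i) by simp,
      pderiv_rename (Equiv.injective _), eval_rename]
  rw [show (v ∘ ⇑g) ∘ ⇑g⁻¹ = v from funext fun x => by simp]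

lemma masterZero [CharP K 2] (a : Fin 4 → K) (s : K) (u : Fin 4 → K)
    (hu0 : u 0 = s) (hu1 : u 1 = s) (hu2 : u 2 = 0) (hu3 : u 3 = 0) :
    eval u (symQuartic a) = 0 ∧ ∀ i, eval u (pderiv i (symQuartic a)) = 0 := by
  have two0 : (2 : K) = 0 := by exact_mod_cast CharP.cast_eq_zero K 2
  refine ⟨?_, ?_⟩
  · rw [evalF, hu0, hu1, hu2, hu3]
    linear_combination (2*(a 1)*s^4 + 8*(a 0)*s^4) * two0
  · have E0 : eval u (pderiv (0 : Fin 4) (symQuartic a)) = 0 := by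
      rw [evalPD, hu0, hu1, hu2, hu3]
      linear_combination (4*(a 1)*s^3 + 16*(a 0)*s^3) * two0
    have E1 : eval u (pderiv (1 : Fin 4) (symQuartic a)) = 0 := by
      rw [evalPD, hu0, hu1, hu2, hu3]
      linear_combination (4*(a 1)*s^3 + 16*(a 0)*s^3) * two0
    have E2 : eval u (pderiv (2 : Fin 4) (symQuartic a)) = 0 := by
      rw [evalPD, hu0, hu1, hu2, hu3]
      linear_combination ((a 2)*s^3 + 6*(a 1)*s^3 + 16*(a 0)*s^3) * two0
    have E3 : eval u (pderiv (3 : Fin 4) (symQuartic a)) = 0 := by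
      rw [evalPD, hu0, hu1, hu2, hu3]
      linear_combination ((a 2)*s^3 + 6*(a 1)*s^3 + 16*(a 0)*s^3) * two0
    intro i
    fin_cases i
    · exact E0
    · exact E1
    · exact E2
    · exact E3

lemma master [CharP K 2] (w t0 t p q : K) (hq : q = w + p) (a : Fin 4 → K) (hw : w ≠ 0)
    (ha0 : a 0 * w^3 = t0 * (1+w)) (ha1 : a 1 * w = t0) (ha2 : a 2 = t0) (ha3 : a 3 = t0 * w)
    (u : Fin 4 → K) (hu0 : u 0 = t*p) (hu1 : u 1 = t*q) (hu2 : u 2 = t) (hu3 : u 3 = t) :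
    eval u (symQuartic a) = 0 ∧ ∀ i, eval u (pderiv i (symQuartic a)) = 0 := by
  have two0 : (2 : K) = 0 := by exact_mod_cast CharP.cast_eq_zero K 2
  subst hq
  refine ⟨?_, ?_⟩
  · have H : w^3 * eval u (symQuartic a) = 0 := by
      rw [evalF, hu0, hu1, hu2, hu3]
      linear_combination ((t*p + t*(w+p) + t + t)^4) * ha0 + (w^2*(t*p + t*(w+p) + t + t)^2*(t*p*(t*(w+p)) + t*p*t + t*p*t + (t*(w+p))*t + (t*(w+p))*t + t*t)) * ha1 + (w^3*(t*p + t*(w+p) + t + t)*(t*p*(t*(w+p))*t + t*p*(t*(w+p))*t + t*p*t*t + (t*(w+p))*t*t)) * ha2 + (w^3*(t*p*(t*(w+p))*t*t)) * ha3 + (8*t0*t^4 + 24*t0*t^4*w + 30*t0*t^4*w^2 + 22*t0*t^4*w^3 + 10*t0*t^4*w^4 + 2*t0*t^4*w^5 + 32*t0*t^4*p + 80*t0*t^4*p*w + 84*t0*t^4*p*w^2 + 50*t0*t^4*p*w^3 + 16*t0*t^4*p*w^4 + 2*t0*t^4*p*w^5 + 48*t0*t^4*p^2 + 96*t0*t^4*p^2*w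 + 80*t0*t^4*p^2*w^2 + 34*t0*t^4*p^2*w^3 + 6*t0*t^4*p^2*w^4 + 32*t0*t^4*p^3 + 48*t0*t^4*p^3*w + 28*t0*t^4*p^3*w^2 + 6*t0*t^4*p^3*w^3 + 8*t0*t^4*p^4 + 8*t0*t^4*p^4*w + 2*t0*t^4*p^4*w^2) * two0
    exact (mul_eq_zero.mp H).resolve_left (pow_ne_zero 3 hw)
  · have E0 : eval u (pderiv (0 : Fin 4) (symQuartic a)) = 0 := by
      have H : w * eval u (pderiv (0 : Fin 4) (symQuartic a)) = 0 := by
        rw [evalPD, hu0, hu1, hu2, hu3]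
        linear_combination (2*(t*p + t*(w+p) + t + t)*(t*p*(t*(w+p)) + t*p*t + t*p*t + (t*(w+p))*t + (t*(w+p))*t + t*t) + (t*p + t*(w+p) + t + t)^2*((t*p + t*(w+p) + t + t) - (t*p))) * ha1 + (w*((t*p*(t*(w+p))*t + t*p*(t*(w+p))*t + t*p*t*t + (t*(w+p))*t*t) + (t*p + t*(w+p) + t + t)*((t*p*(t*(w+p)) + t*p*t + t*p*t + (t*(w+p))*t + (t*(w+p))*t + t*t) - (t*p)*(t*p + t*(w+p) + t + t) + (t*p)^2))) * ha2 + (w*((t*p*(t*(w+p))*t + t*p*(t*(w+p))*t + t*p*t*t + (t*(w+p))*t*t) - (t*p)*((t*p*(t*(w+p)) + t*p*t + t*p*t + (t*(w+p))*t + (t*(w+p))*t + t*t) - (t*p)*(t*p + t*(w+p) + t + t) + (t*p)^2))) * ha3 + (6*t0*t^3 + 12*t0*t^3*w + 8*t0*t^3*w^2 + 2*t0*t^3*w^3 + 20*t0*t^3*p + 24*t0*t^3*p*w + 8*t0*t^3*p*w^2 + 18*t0*t^3*p^2 + 10*t0*t^3*p^2*w + 4*t0*t^3*p^3 + 16*(a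 0)*t^3*w + 24*(a 0)*t^3*w^2 + 12*(a 0)*t^3*w^3 + 2*(a 0)*t^3*w^4 + 48*(a 0)*t^3*p*w + 48*(a 0)*t^3*p*w^2 + 12*(a 0)*t^3*p*w^3 + 48*(a 0)*t^3*p^2*w + 24*(a 0)*t^3*p^2*w^2 + 16*(a 0)*t^3*p^3*w) * two0
      exact (mul_eq_zero.mp H).resolve_left hw
    have E1 : eval u (pderiv (1 : Fin 4) (symQuartic a)) = 0 := by
      have H : w * eval u (pderiv (1 : Fin 4) (symQuartic a)) = 0 := by
        rw [evalPD, hu0, hu1, hu2, hu3]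
        linear_combination (2*(t*p + t*(w+p) + t + t)*(t*p*(t*(w+p)) + t*p*t + t*p*t + (t*(w+p))*t + (t*(w+p))*t + t*t) + (t*p + t*(w+p) + t + t)^2*((t*p + t*(w+p) + t + t) - (t*(w+p)))) * ha1 + (w*((t*p*(t*(w+p))*t + t*p*(t*(w+p))*t + t*p*t*t + (t*(w+p))*t*t) + (t*p + t*(w+p) + t + t)*((t*p*(t*(w+p)) + t*p*t + t*p*t + (t*(w+p))*t + (t*(w+p))*t + t*t) - (t*(w+p))*(t*p + t*(w+p) + t + t) + (t*(w+p))^2))) * ha2 + (w*((t*p*(t*(w+p))*t + t*p*(t*(w+p))*t + t*p*t*t + (t*(w+p))*t*t) - (t*(w+p))*((t*p*(t*(w+p)) + t*p*t + t*p*t + (t*(w+p))*t + (t*(w+p))*t + t*t) - (t*(w+p))*(t*p + t*(w+p) + t + t) + (t*(w+p))^2))) * ha3 + (6*t0*t^3 + 10*t0*t^3*w + 4*t0*t^3*w^2 + 20*t0*t^3*p + 20*t0*t^3*p*w + 4*t0*t^3*p*w^2 + 18*t0*t^3*p^2 + 8*t0*t^3*p^2*w + 4*t0*t^3*p^3 +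 16*(a 0)*t^3*w + 24*(a 0)*t^3*w^2 + 12*(a 0)*t^3*w^3 + 2*(a 0)*t^3*w^4 + 48*(a 0)*t^3*p*w + 48*(a 0)*t^3*p*w^2 + 12*(a 0)*t^3*p*w^3 + 48*(a 0)*t^3*p^2*w + 24*(a 0)*t^3*p^2*w^2 + 16*(a 0)*t^3*p^3*w) * two0
      exact (mul_eq_zero.mp H).resolve_left hw
    have E2 : eval u (pderiv (2 : Fin 4) (symQuartic a)) = 0 := by
      have H : w * eval u (pderiv (2 : Fin 4) (symQuartic a)) = 0 := by
        rw [evalPD, hu0, hu1, hu2, hu3]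
        linear_combination (2*(t*p + t*(w+p) + t + t)*(t*p*(t*(w+p)) + t*p*t + t*p*t + (t*(w+p))*t + (t*(w+p))*t + t*t) + (t*p + t*(w+p) + t + t)^2*((t*p + t*(w+p) + t + t) - t)) * ha1 + (w*((t*p*(t*(w+p))*t + t*p*(t*(w+p))*t + t*p*t*t + (t*(w+p))*t*t) + (t*p + t*(w+p) + t + t)*((t*p*(t*(w+p)) + t*p*t + t*p*t + (t*(w+p))*t + (t*(w+p))*t + t*t) - t*(t*p + t*(w+p) + t + t) + t^2))) * ha2 + (w*((t*p*(t*(w+p))*t + t*p*(t*(w+p))*t + t*p*t*t + (t*(w+p))*t*t) - t*((t*p*(t*(w+p)) + t*p*t + t*p*t + (t*(w+p))*t + (t*(w+p))*t + t*t) - t*(t*p + t*(w+p) + t + t) + t^2))) * ha3 + (4*t0*t^3 + 9*t0*t^3*w + 6*t0*t^3*w^2 + t0*t^3*w^3 + 18*t0*t^3*p + 23*t0*t^3*p*w + 8*t0*t^3*p*w^2 + t0*t^3*p*w^3 + 20*t0*t^3*p^2 + 13*t0*t^3*p^2*w + 2*t0*t^3*p^2*w^2 + 6*t0*t^3*p^3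 + t0*t^3*p^3*w + 16*(a 0)*t^3*w + 24*(a 0)*t^3*w^2 + 12*(a 0)*t^3*w^3 + 2*(a 0)*t^3*w^4 + 48*(a 0)*t^3*p*w + 48*(a 0)*t^3*p*w^2 + 12*(a 0)*t^3*p*w^3 + 48*(a 0)*t^3*p^2*w + 24*(a 0)*t^3*p^2*w^2 + 16*(a 0)*t^3*p^3*w) * two0
      exact (mul_eq_zero.mp H).resolve_left hw
    have E3 : eval u (pderiv (3 : Fin 4) (symQuartic a)) = 0 := by
      have H : w * eval u (pderiv (3 : Fin 4) (symQuartic a)) = 0 := by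
        rw [evalPD, hu0, hu1, hu2, hu3]
        linear_combination (2*(t*p + t*(w+p) + t + t)*(t*p*(t*(w+p)) + t*p*t + t*p*t + (t*(w+p))*t + (t*(w+p))*t + t*t) + (t*p + t*(w+p) + t + t)^2*((t*p + t*(w+p) + t + t) - t)) * ha1 + (w*((t*p*(t*(w+p))*t + t*p*(t*(w+p))*t + t*p*t*t + (t*(w+p))*t*t) + (t*p + t*(w+p) + t + t)*((t*p*(t*(w+p)) + t*p*t + t*p*t + (t*(w+p))*t + (t*(w+p))*t + t*t) - t*(t*p + t*(w+p) + t + t) + t^2))) * ha2 + (w*((t*p*(t*(w+p))*t + t*p*(t*(w+p))*t + t*p*t*t + (t*(w+p))*t*t) - t*((t*p*(t*(w+p)) + t*p*t + t*p*t + (t*(w+p))*t + (t*(w+p))*t + t*t) - t*(t*p + t*(w+p) + t + t) + t^2))) * ha3 + (4*t0*t^3 + 9*t0*t^3*w + 6*t0*t^3*w^2 + t0*t^3*w^3 + 18*t0*t^3*p + 23*t0*t^3*p*w + 8*t0*t^3*p*w^2 + t0*t^3*p*w^3 + 20*t0*t^3*p^2 + 13*t0*t^3*p^2*w + 2*t0*t^3*p^2*w^2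 + 6*t0*t^3*p^3 + t0*t^3*p^3*w + 16*(a 0)*t^3*w + 24*(a 0)*t^3*w^2 + 12*(a 0)*t^3*w^3 + 2*(a 0)*t^3*w^4 + 48*(a 0)*t^3*p*w + 48*(a 0)*t^3*p*w^2 + 12*(a 0)*t^3*p*w^3 + 48*(a 0)*t^3*p^2*w + 24*(a 0)*t^3*p^2*w^2 + 16*(a 0)*t^3*p^3*w) * two0
      exact (mul_eq_zero.mp H).resolve_left hw
    intro i
    fin_cases i
    · exact E0
    · exact E1
    · exact E2
    · exact E3

end SQAux

/-- Let `b ≠ c`, `b, c ≠ 1`, `w := b + c ≠ 0`, and `a ∈ K⁴` nonzero, over an algebraically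
closed field of characteristic 2.  Then `Sing(X_a)` contains both the `S₄`-orbit of
`[1:1:0:0]` and the `S₄`-orbit of `[b:c:1:1]` iff `a` is proportional to
`((1+w)/w³, 1/w, 1, w)`; and in that case every point `[b':c':1:1]` with `b' + c' = w` is
singular, so `Sing(X_a)` is infinite. -/
theorem symQuartic_infinitely_many_singular_points
    {K : Type*} [Field K] [IsAlgClosed K] [CharP K 2]
    (b c : K) (hbc : b ≠ c) (hb : b ≠ 1) (hc : c ≠ 1) (hw : b + c ≠ 0)
    (a : Fin 4 → K) (ha : a ≠ 0) :
    ((s4Orbit (![1, 1, 0, 0] : Fin 4 → K) ⊆ singLocus (symQuartic a) ∧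
        s4Orbit (![b, c, 1, 1] : Fin 4 → K) ⊆ singLocus (symQuartic a)) ↔
      ∃ t : K, t ≠ 0 ∧ a 0 = t * ((1 + (b + c)) / (b + c) ^ 3) ∧
        a 1 = t * (1 / (b + c)) ∧ a 2 = t ∧ a 3 = t * (b + c)) ∧
    ((∃ t : K, t ≠ 0 ∧ a 0 = t * ((1 + (b + c)) / (b + c) ^ 3) ∧
        a 1 = t * (1 / (b + c)) ∧ a 2 = t ∧ a 3 = t * (b + c)) →
      (∀ b' c' : K, b' + c' = b + c →
        Projectivization.mk K (![b', c', 1, 1] : Fin 4 → K)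
          (by intro h0; have := congrFun h0 2; simp at this) ∈ singLocus (symQuartic a)) ∧
      (singLocus (symQuartic a)).Infinite) := by
  have two0 : (2 : K) = 0 := by exact_mod_cast CharP.cast_eq_zero K 2
  -- basic nonvanishing facts
  have hb1 : (1 : K) + b ≠ 0 := fun h => hb (by linear_combination h - two0)
  have hc1 : (1 : K) + c ≠ 0 := fun h => hc (by linear_combination h - two0)
  -- orbit 1 is always contained in the singular locus
  have incl1 : s4Orbit (![1, 1, 0, 0] : Fin 4 → K) ⊆ singLocus (symQuartic a) := by
    rintro q ⟨g, hg, rfl⟩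
    intro v hv hmk
    rw [Projectivization.mk_eq_mk_iff'] at hmk
    obtain ⟨sc, hsc⟩ := hmk
    rw [← hsc,
      show sc • ((![1, 1, 0, 0] : Fin 4 → K) ∘ ⇑g) = (sc • (![1, 1, 0, 0] : Fin 4 → K)) ∘ ⇑g
        from rfl]
    have hm := SQAux.masterZero a sc (sc • (![(1:K), 1, 0, 0]))
      (by simp) (by simp) (by simp) (by simp)
    exact ⟨by rw [SQAux.eval_comp_perm]; exact hm.1,
      fun i => by rw [SQAux.evalPD_comp_perm]; exact hm.2 (g i)⟩
  -- membership of an arbitrary point [b', c', 1, 1] with b' + c' = b + c, given proportionality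
  have genpoint : (∃ t : K, t ≠ 0 ∧ a 0 = t * ((1 + (b + c)) / (b + c) ^ 3) ∧
        a 1 = t * (1 / (b + c)) ∧ a 2 = t ∧ a 3 = t * (b + c)) →
      ∀ b' c' : K, b' + c' = b + c → ∀ (hne : (![b', c', 1, 1] : Fin 4 → K) ≠ 0),
        Projectivization.mk K (![b', c', 1, 1] : Fin 4 → K) hne ∈ singLocus (symQuartic a) := by
    rintro ⟨t0, ht0, h0, h1, h2, h3⟩ b' c' hb'c' hne
    have ha0 : a 0 * (b+c)^3 = t0 * (1+(b+c)) := by rw [h0]; field_simp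
    have ha1 : a 1 * (b+c) = t0 := by rw [h1]; field_simp
    intro v hv hmk
    rw [Projectivization.mk_eq_mk_iff'] at hmk
    obtain ⟨sc, hsc⟩ := hmk
    rw [← hsc]
    exact SQAux.master (b+c) t0 sc b' c' (by linear_combination hb'c' - b' * two0) a hw
      ha0 ha1 h2 h3 (sc • (![b', c', 1, 1] : Fin 4 → K)) (by simp) (by simp) (by simp) (by simp)
  -- orbit 2 inclusion given proportionality
  have incl2 : (∃ t : K, t ≠ 0 ∧ a 0 = t * ((1 + (b + c)) / (b + c) ^ 3) ∧
        a 1 = t * (1 / (b + c)) ∧ a 2 = t ∧ a 3 = t * (b + c)) →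
      s4Orbit (![b, c, 1, 1] : Fin 4 → K) ⊆ singLocus (symQuartic a) := by
    rintro ⟨t0, ht0, h0, h1, h2, h3⟩ q ⟨g, hg, rfl⟩
    have ha0 : a 0 * (b+c)^3 = t0 * (1+(b+c)) := by rw [h0]; field_simp
    have ha1 : a 1 * (b+c) = t0 := by rw [h1]; field_simp
    intro v hv hmk
    rw [Projectivization.mk_eq_mk_iff'] at hmk
    obtain ⟨sc, hsc⟩ := hmk
    rw [← hsc,
      show sc • ((![b, c, 1, 1] : Fin 4 → K) ∘ ⇑g) = (sc • (![b, c, 1, 1] : Fin 4 → K)) ∘ ⇑g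
        from rfl]
    have hm := SQAux.master (b+c) t0 sc b c (by linear_combination -(b * two0)) a hw
      ha0 ha1 h2 h3 (sc • (![b, c, 1, 1] : Fin 4 → K)) (by simp) (by simp) (by simp) (by simp)
    exact ⟨by rw [SQAux.eval_comp_perm]; exact hm.1,
      fun i => by rw [SQAux.evalPD_comp_perm]; exact hm.2 (g i)⟩
  constructor
  · constructor
    · rintro ⟨-, h2orb⟩
      -- extract conditions at the base point [b, c, 1, 1]
      have hne : (![b, c, 1, 1] : Fin 4 → K) ≠ 0 := by
        intro h0; have := congrFun h0 2; simp at this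
      have hmem : Projectivization.mk K (![b, c, 1, 1] : Fin 4 → K) hne
          ∈ singLocus (symQuartic a) := by
        apply h2orb
        exact ⟨1, by simpa using hne, rfl⟩
      obtain ⟨hF, hD⟩ := hmem (![b, c, 1, 1] : Fin 4 → K) hne rfl
      rw [SQAux.evalF] at hF
      simp only [Matrix.cons_val_zero, Matrix.cons_val_one, Matrix.head_cons,
        Matrix.cons_val_two, Matrix.cons_val_three, Matrix.tail_cons, Matrix.head_fin_const] at hF
      have hD0 := hD 0
      have hD1 := hD 1
      have hD2 := hD 2
      rw [SQAux.evalPD] at hD0 hD1 hD2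
      simp only [Matrix.cons_val_zero, Matrix.cons_val_one, Matrix.head_cons,
        Matrix.cons_val_two, Matrix.cons_val_three, Matrix.tail_cons,
        Matrix.head_fin_const] at hD0 hD1 hD2
      have key1 : c * (a 1 * (b+c)^2 + a 3) = 0 := by
        linear_combination hD0 + ((-1)*(a 2) + (-3)*(a 2)*c + (-1)*(a 2)*c^2 + (-1)*(a 2)*b + (-2)*(a 2)*b*c + (-6)*(a 1) + (-11)*(a 1)*c + (-5)*(a 1)*c^2 + (-9)*(a 1)*b + (-10)*(a 1)*b*c + (-1)*(a 1)*b*c^2 + (-3)*(a 1)*b^2 + (-1)*(a 1)*b^2*c + (-16)*(a 0) + (-24)*(a 0)*c + (-12)*(a 0)*c^2 + (-2)*(a 0)*c^3 + (-24)*(a 0)*b + (-24)*(a 0)*b*c + (-6)*(a 0)*b*c^2 + (-12)*(a 0)*b^2 + (-6)*(a 0)*b^2*c + (-2)*(a 0)*b^3) * two0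
      have key2 : b * (a 1 * (b+c)^2 + a 3) = 0 := by
        linear_combination hD1 + ((-1)*(a 2) + (-1)*(a 2)*c + (-3)*(a 2)*b + (-2)*(a 2)*b*c + (-1)*(a 2)*b^2 + (-6)*(a 1) + (-9)*(a 1)*c + (-3)*(a 1)*c^2 + (-11)*(a 1)*b + (-10)*(a 1)*b*c + (-1)*(a 1)*b*c^2 + (-5)*(a 1)*b^2 + (-1)*(a 1)*b^2*c + (-16)*(a 0) + (-24)*(a 0)*c + (-12)*(a 0)*c^2 + (-2)*(a 0)*c^3 + (-24)*(a 0)*b + (-24)*(a 0)*b*c + (-6)*(a 0)*b*c^2 + (-12)*(a 0)*b^2 + (-6)*(a 0)*b^2*c + (-2)*(a 0)*b^3) * two0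
      have hsum : a 1 * (b+c)^2 + a 3 = 0 := by
        rcases mul_eq_zero.mp key1 with h | h
        · rcases mul_eq_zero.mp key2 with h' | h'
          · exact absurd (by rw [h, h']; ring) hw
          · exact h'
        · exact h
      have ha3d : a 3 = a 1 * (b+c)^2 := by
        linear_combination hsum - (a 1 * (b+c)^2) * two0
      have key3 : (b+c) * ((1+b)*(1+c)) * (a 1 * (b+c) + a 2) = 0 := by
        linear_combination hD2 + ((-1)*b*c) * ha3d + ((-1)*(a 2)*c + (-1)*(a 2)*b + (-2)*(a 2)*b*c + (-4)*(a 1) + (-9)*(a 1)*c + (-4)*(a 1)*c^2 + (-9)*(a 1)*b + (-10)*(a 1)*b*c + (-1)*(a 1)*b*c^2 + (-4)*(a 1)*b^2 + (-1)*(a 1)*b^2*c + (-16)*(a 0) + (-24)*(a 0)*c + (-12)*(a 0)*c^2 + (-2)*(a 0)*c^3 + (-24)*(a 0)*b + (-24)*(a 0)*b*c + (-6)*(a 0)*b*c^2 + (-12)*(a 0)*b^2 + (-6)*(a 0)*b^2*c + (-2)*(a 0)*b^3) * two0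
      have hsum2 : a 1 * (b+c) + a 2 = 0 := by
        rcases mul_eq_zero.mp key3 with h | h
        · rcases mul_eq_zero.mp h with h' | h'
          · exact absurd h' hw
          · rcases mul_eq_zero.mp h' with h'' | h''
            · exact absurd h'' hb1
            · exact absurd h'' hc1
        · exact h
      have ha2d : a 2 = a 1 * (b+c) := by
        linear_combination hsum2 - (a 1 * (b+c)) * two0
      have hF0 := hF
      have key4 : a 0 * (b+c)^4 + a 1 * (b+c)^2 * (1+(b+c)) = 0 := by
        linear_combination hF0 + ((-1)*b*c) * ha3d + ((-2)*c + (-1)*c^2 + (-2)*b + (-6)*b*c + (-2)*b*c^2 + (-1)*b^2 + (-2)*b^2*c) * ha2d + ((-2)*(a 1) + (-6)*(a 1)*c + (-5)*(a 1)*c^2 + (-1)*(a 1)*c^3 + (-6)*(a 1)*b + (-12)*(a 1)*b*c + (-7)*(a 1)*b*c^2 + (-2)*(a 1)*b*c^3 + (-5)*(a 1)*b^2 + (-7)*(a 1)*b^2*c + (-4)*(a 1)*b^2*c^2 + (-1)*(a 1)*b^3 + (-2)*(a 1)*b^3*c + (-8)*(a 0) + (-16)*(a 0)*c + (-12)*(a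 0)*c^2 + (-4)*(a 0)*c^3 + (-16)*(a 0)*b + (-24)*(a 0)*b*c + (-12)*(a 0)*b*c^2 + (-12)*(a 0)*b^2 + (-12)*(a 0)*b^2*c + (-4)*(a 0)*b^3) * two0
      refine ⟨a 2, ?_, ?_, ?_, rfl, ?_⟩
      · intro h2z
        have ha1z : a 1 = 0 := by
          have : a 1 * (b+c) = 0 := by rw [← ha2d]; exact h2z
          exact (mul_eq_zero.mp this).resolve_right hw
        have ha3z : a 3 = 0 := by rw [ha3d, ha1z]; ring
        have ha0z : a 0 = 0 := by
          have h4 : a 0 * (b+c)^4 = 0 := by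
            linear_combination key4 - ((b+c)^2*(1+(b+c))) * ha1z
          exact (mul_eq_zero.mp h4).resolve_right (pow_ne_zero 4 hw)
        apply ha
        funext i
        fin_cases i
        · exact ha0z
        · exact ha1z
        · exact h2z
        · exact ha3z
      · have H : (b+c) * (a 0 * (b+c)^3) = (b+c) * (a 2 * (1+(b+c))) := by
          linear_combination key4 - ((b+c)*(1+(b+c))) * ha2d
            - (a 1*(b+c)^2*(1+(b+c))) * two0
        have H2 : a 0 * (b+c)^3 = a 2 * (1+(b+c)) := mul_left_cancel₀ hw H
        field_simp
        linear_combination H2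
      · field_simp
        linear_combination -ha2d
      · linear_combination ha3d - (b+c) * ha2d
    · intro hex
      exact ⟨incl1, incl2 hex⟩
  · intro hex
    have hpt := genpoint hex
    refine ⟨fun b' c' h => hpt b' c' h _, ?_⟩
    have hinj : Function.Injective (fun x : K =>
        Projectivization.mk K (![x, (b+c) - x, 1, 1] : Fin 4 → K)
          (by intro h0; have := congrFun h0 2; simp at this)) := by
      intro x y hxy
      simp only at hxy
      rw [Projectivization.mk_eq_mk_iff'] at hxy
      obtain ⟨sc, hsc⟩ := hxy
      have e2 := congrFun hsc 2
      have e0 := congrFun hsc 0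
      simp at e2 e0
      rw [e2] at e0
      simpa using e0.symm
    apply Set.infinite_of_injective_forall_mem hinj
    intro x
    exact hpt x ((b+c) - x) (by ring) _

end
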